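/- Let V : ℝ^p → ℝ be convex, L an m×p real matrix, λ₁ > 0, λ₂ > 0, μ₁ > 0, μ₂ > 0, and define the augmented Lagrangian ℒ(β,a,b,u,v) = V(β) + λ₁‖a‖₁ + λ₂‖b‖₁ + ⟨u, β − a⟩ + ⟨v, Lβ − b⟩ + (μ₁/2)‖β − a‖₂² + (μ₂/2)‖Lβ − b‖₂² for β, a, u ∈ ℝ^p and b, v ∈ ℝ^m. Then β* ∈ ℝ^p is a global minimizer of Φ(β) = V(β) + λ₁‖β‖₁ + λ₂‖Lβ‖₁ if and only if there exist a* ∈ ℝ^p, b* ∈ ℝ^m, u* ∈ ℝ^p, v* ∈ ℝ^m such that (β*, a*, b*, u*, v*) is a saddle point of ℒ, i.e., ℒ(β*, a*, b*, u, v) ≤ ℒ(β*, a*, b*, u*, v*) ≤ ℒ(β, a, b, u*, v*) for all β, a, u ∈ ℝ^p and all b, v ∈ ℝ^m. -/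

import Mathlib

/-
Let `h(w₁, w₂) = inf_x V x + λ₁‖x - w₁‖₁ + λ₂‖Lx - w₂‖₁` be the perturbed value function of the
fused Lasso. It is convex (an infimal projection of a jointly convex function) and finite, and at
`0` it equals `min Φ = Φ(β*)`. A subgradient of `h` at `0`, with its sign flipped, is a pair of
multipliers `(u*, v*)` with `Φ(β*) ≤ V x + λ₁‖a‖₁ + λ₂‖b‖₁ + ⟨u*, x - a⟩ + ⟨v*, Lx - b⟩` for all
`x, a, b`; since the quadratic penalties are nonnegative, `(β*, β*, Lβ*, u*, v*)` is a saddle point.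
Conversely, maximality of the augmented Lagrangian in `(u, v)` forces `a* = β*` and `b* = Lβ*`,
and on such feasible points the augmented Lagrangian is just `Φ`.
-/

open Filter Matrix Finset

/-- The ℓ1 norm on `Fin d → ℝ`. -/
noncomputable def l1 {d : ℕ} (x : Fin d → ℝ) : ℝ := ∑ i, |x i|

/-- The Euclidean (ℓ2) norm on `Fin d → ℝ`. -/
noncomputable def l2 {d : ℕ} (x : Fin d → ℝ) : ℝ := Real.sqrt (∑ i, (x i) ^ 2)

/-- The Euclidean inner product on `Fin d → ℝ`. -/
def dotp {d : ℕ} (x y : Fin d → ℝ) : ℝ := ∑ i, x i * y i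

/-- `g` is a subgradient of `f` at `x`. -/
def IsSubgrad {d : ℕ} (f : (Fin d → ℝ) → ℝ) (x g : Fin d → ℝ) : Prop :=
  ∀ z, f z ≥ f x + dotp g (z - x)

open Set

theorem ConvexOn.exists_subgradient_of_continuous {E : Type*} [TopologicalSpace E]
    [AddCommGroup E] [IsTopologicalAddGroup E] [Module ℝ E] [ContinuousSMul ℝ E] {f : E → ℝ}
    (hf : ConvexOn ℝ univ f) (hcont : Continuous f) (x : E) :
    ∃ φ : E →L[ℝ] ℝ, ∀ z, f x + φ (z - x) ≤ f z := by
  set S : Set (E × ℝ) := {q | f q.1 < q.2}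
  have hS_open : IsOpen S := isOpen_lt (hcont.comp continuous_fst) continuous_snd
  have hS_convex : Convex ℝ S := by
    have hg : ConvexOn ℝ univ fun q : E × ℝ => f q.1 - q.2 :=
      (hf.comp_linearMap (LinearMap.fst ℝ E ℝ)).sub ((LinearMap.snd ℝ E ℝ).concaveOn convex_univ)
    simpa [S, sub_neg] using hg.convex_lt 0
  obtain ⟨φ, hφ⟩ := geometric_hahn_banach_open_point hS_convex hS_open
    (show (x, f x) ∉ S by simp [S])
  set ψ := φ.comp (ContinuousLinearMap.inl ℝ E ℝ)
  set c := φ (0, 1)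
  have hφ_apply (z : E) (t : ℝ) : φ (z, t) = ψ z + t * c := by
    rw [← φ.comp_inl_add_comp_inr (z, t), ← smul_eq_mul, ← φ.map_smul]
    simp [ψ]
  -- the separating hyperplane is not vertical since `(x, f x + 1) ∈ S`
  have hc : c < 0 := by
    have := hφ (x, f x + 1) (by simp [S])
    rw [hφ_apply, hφ_apply] at this
    linarith
  have hc' : 0 < -c := neg_pos.2 hc
  refine ⟨(-c)⁻¹ • ψ, fun z => ?_⟩
  have hψ : ψ z - ψ x ≤ -c * (f z - f x) := by
    refine le_of_forall_pos_lt_add fun δ hδ => ?_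
    have := hφ (z, f z + δ / -c) (lt_add_of_pos_right _ (div_pos hδ hc'))
    have hδc : δ / -c * c = -δ := by field_simp [hc.ne]
    rw [hφ_apply, hφ_apply, add_mul, hδc] at this
    linarith
  rw [_root_.smul_apply, smul_eq_mul, map_sub, ← le_sub_iff_add_le', inv_mul_le_iff₀ hc']
  exact hψ

theorem ConvexOn.ciInf_fst {E W : Type*} [AddCommGroup E] [Module ℝ E] [Nonempty E]
    [AddCommGroup W] [Module ℝ W] {F : E × W → ℝ} (hF : ConvexOn ℝ univ F)
    (hbdd : ∀ w, BddBelow (range fun x => F (x, w))) :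
    ConvexOn ℝ univ fun w => ⨅ x, F (x, w) := by
  refine ⟨convex_univ, fun w₁ _ w₂ _ a b ha hb hab => ?_⟩
  refine le_of_forall_pos_le_add fun ε hε => ?_
  obtain ⟨x₁, hx₁⟩ := exists_lt_of_ciInf_lt (lt_add_of_pos_right (⨅ x, F (x, w₁)) hε)
  obtain ⟨x₂, hx₂⟩ := exists_lt_of_ciInf_lt (lt_add_of_pos_right (⨅ x, F (x, w₂)) hε)
  have hjoint := hF.2 (mem_univ (x₁, w₁)) (mem_univ (x₂, w₂)) ha hb hab
  simp only [Prod.smul_mk, Prod.mk_add_mk, smul_eq_mul] at hjoint ⊢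
  calc ⨅ x, F (x, a • w₁ + b • w₂)
      ≤ F (a • x₁ + b • x₂, a • w₁ + b • w₂) := ciInf_le (hbdd _) _
    _ ≤ a * F (x₁, w₁) + b * F (x₂, w₂) := hjoint
    _ ≤ a * ((⨅ x, F (x, w₁)) + ε) + b * ((⨅ x, F (x, w₂)) + ε) := by gcongr
    _ = a * (⨅ x, F (x, w₁)) + b * (⨅ x, F (x, w₂)) + ε := by linear_combination ε * hab

lemma ConvexOn.comp_linearMap_univ {E F : Type*} [AddCommGroup E] [Module ℝ E] [AddCommGroup F]
    [Module ℝ F] {f : F → ℝ} (hf : ConvexOn ℝ univ f) (g : E →ₗ[ℝ] F) :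
    ConvexOn ℝ univ fun x => f (g x) := by
  have := hf.comp_linearMap g
  rwa [preimage_univ] at this

lemma l1_sub_l1_le {d : ℕ} (x y : Fin d → ℝ) : l1 x - l1 y ≤ l1 (x - y) := by
  simp only [l1, ← Finset.sum_sub_distrib, Pi.sub_apply]
  exact Finset.sum_le_sum fun i _ => abs_sub_abs_le_abs_sub (x i) (y i)

lemma convexOn_l1 {d : ℕ} : ConvexOn ℝ univ (l1 : (Fin d → ℝ) → ℝ) := by
  refine ⟨convex_univ, fun x _ y _ a b ha hb _ => ?_⟩
  simp only [l1, Finset.mul_sum, ← Finset.sum_add_distrib, smul_eq_mul, Pi.add_apply,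
    Pi.smul_apply]
  refine Finset.sum_le_sum fun i _ => (abs_add_le _ _).trans_eq ?_
  rw [abs_mul, abs_mul, abs_of_nonneg ha, abs_of_nonneg hb]

lemma l2_zero {d : ℕ} : l2 (0 : Fin d → ℝ) = 0 := by simp [l2]

lemma dotp_eq_dotProduct {d : ℕ} (x y : Fin d → ℝ) : dotp x y = x ⬝ᵥ y := rfl

lemma LinearMap.exists_dotp_eq {d : ℕ} (φ : (Fin d → ℝ) →ₗ[ℝ] ℝ) :
    ∃ g, ∀ x, φ x = dotp g x :=
  ⟨fun i => φ fun j => if i = j then 1 else 0, fun x => by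
    simp [φ.pi_apply_eq_sum_univ x, dotp, mul_comm]⟩

lemma ContinuousLinearMap.exists_dotp_add_dotp_eq {p m : ℕ}
    (φ : (Fin p → ℝ) × (Fin m → ℝ) →L[ℝ] ℝ) :
    ∃ g₁ g₂, ∀ w, φ w = dotp g₁ w.1 + dotp g₂ w.2 := by
  obtain ⟨g₁, hg₁⟩ := (φ.comp (ContinuousLinearMap.inl ℝ _ _)).toLinearMap.exists_dotp_eq
  obtain ⟨g₂, hg₂⟩ := (φ.comp (ContinuousLinearMap.inr ℝ _ _)).toLinearMap.exists_dotp_eq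
  refine ⟨g₁, g₂, fun w => ?_⟩
  rw [← φ.comp_inl_add_comp_inr, ← hg₁, ← hg₂]
  rfl

lemma eq_zero_of_forall_dotp_le {d : ℕ} {c u₀ : Fin d → ℝ} (h : ∀ u, dotp u c ≤ dotp u₀ c) :
    c = 0 := by
  have hcc : c ⬝ᵥ c ≤ 0 := by
    simpa [dotp_eq_dotProduct, add_dotProduct] using h (u₀ + c)
  exact dotProduct_self_eq_zero.1 (le_antisymm hcc (dotProduct_self_star_nonneg c))

namespace FusedLasso

variable {p m : ℕ} (V : (Fin p → ℝ) → ℝ) (L : Matrix (Fin m) (Fin p) ℝ) (lam1 lam2 mu1 mu2 : ℝ)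

noncomputable def objective (x : Fin p → ℝ) : ℝ :=
  V x + lam1 * l1 x + lam2 * l1 (L *ᵥ x)

noncomputable def lagrangian (x a : Fin p → ℝ) (b : Fin m → ℝ) (u : Fin p → ℝ)
    (v : Fin m → ℝ) : ℝ :=
  V x + lam1 * l1 a + lam2 * l1 b + dotp u (x - a) + dotp v (L *ᵥ x - b)

noncomputable def augLagrangian (x a : Fin p → ℝ) (b : Fin m → ℝ) (u : Fin p → ℝ)
    (v : Fin m → ℝ) : ℝ :=
  lagrangian V L lam1 lam2 x a b u v + mu1 / 2 * l2 (x - a) ^ 2 + mu2 / 2 * l2 (L *ᵥ x - b) ^ 2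

noncomputable def perturbedValue (w : (Fin p → ℝ) × (Fin m → ℝ)) : ℝ :=
  ⨅ x, V x + lam1 * l1 (x - w.1) + lam2 * l1 (L *ᵥ x - w.2)

variable {V L lam1 lam2 mu1 mu2}

lemma augLagrangian_feasible (x : Fin p → ℝ) (u : Fin p → ℝ) (v : Fin m → ℝ) :
    augLagrangian V L lam1 lam2 mu1 mu2 x x (L *ᵥ x) u v = objective V L lam1 lam2 x := by
  simp [augLagrangian, lagrangian, objective, dotp, l2_zero]

lemma lagrangian_le_augLagrangian (hmu1 : 0 ≤ mu1) (hmu2 : 0 ≤ mu2) (x a : Fin p → ℝ)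
    (b : Fin m → ℝ) (u : Fin p → ℝ) (v : Fin m → ℝ) :
    lagrangian V L lam1 lam2 x a b u v ≤ augLagrangian V L lam1 lam2 mu1 mu2 x a b u v := by
  unfold augLagrangian
  have : 0 ≤ mu1 / 2 * l2 (x - a) ^ 2 := by positivity
  have : 0 ≤ mu2 / 2 * l2 (L *ᵥ x - b) ^ 2 := by positivity
  linarith

lemma feasible_of_forall_augLagrangian_le {x a : Fin p → ℝ} {b : Fin m → ℝ}
    {u₀ : Fin p → ℝ} {v₀ : Fin m → ℝ}
    (h : ∀ u v, augLagrangian V L lam1 lam2 mu1 mu2 x a b u v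
      ≤ augLagrangian V L lam1 lam2 mu1 mu2 x a b u₀ v₀) :
    x = a ∧ L *ᵥ x = b := by
  constructor
  · refine sub_eq_zero.1 (eq_zero_of_forall_dotp_le (u₀ := u₀) fun u => ?_)
    have := h u v₀
    simp only [augLagrangian, lagrangian] at this
    linarith
  · refine sub_eq_zero.1 (eq_zero_of_forall_dotp_le (u₀ := v₀) fun v => ?_)
    have := h u₀ v
    simp only [augLagrangian, lagrangian] at this
    linarith

lemma bddBelow_perturbed (hlam1 : 0 ≤ lam1) (hlam2 : 0 ≤ lam2)
    (hΦ : BddBelow (range (objective V L lam1 lam2))) (w : (Fin p → ℝ) × (Fin m → ℝ)) :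
    BddBelow (range fun x => V x + lam1 * l1 (x - w.1) + lam2 * l1 (L *ᵥ x - w.2)) := by
  obtain ⟨c, hc⟩ := hΦ
  refine ⟨c - lam1 * l1 w.1 - lam2 * l1 w.2, forall_mem_range.2 fun x => ?_⟩
  have hx : c ≤ objective V L lam1 lam2 x := hc (mem_range_self x)
  have h₁ := mul_le_mul_of_nonneg_left (l1_sub_l1_le x w.1) hlam1
  have h₂ := mul_le_mul_of_nonneg_left (l1_sub_l1_le (L *ᵥ x) w.2) hlam2
  unfold objective at hx
  linarith

lemma convexOn_perturbedValue (hV : ConvexOn ℝ univ V) (hlam1 : 0 ≤ lam1) (hlam2 : 0 ≤ lam2)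
    (hΦ : BddBelow (range (objective V L lam1 lam2))) :
    ConvexOn ℝ univ (perturbedValue V L lam1 lam2) := by
  let fst := LinearMap.fst ℝ (Fin p → ℝ) ((Fin p → ℝ) × (Fin m → ℝ))
  let snd := LinearMap.snd ℝ (Fin p → ℝ) ((Fin p → ℝ) × (Fin m → ℝ))
  have hF : ConvexOn ℝ univ fun q : (Fin p → ℝ) × (Fin p → ℝ) × (Fin m → ℝ) =>
      V q.1 + lam1 * l1 (q.1 - q.2.1) + lam2 * l1 (L *ᵥ q.1 - q.2.2) :=
    ((hV.comp_linearMap_univ fst).add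
      ((convexOn_l1.comp_linearMap_univ (fst - (LinearMap.fst ..).comp snd)).smul hlam1)).add
      ((convexOn_l1.comp_linearMap_univ (L.mulVecLin.comp fst - (LinearMap.snd ..).comp snd)).smul
        hlam2)
  exact hF.ciInf_fst (bddBelow_perturbed hlam1 hlam2 hΦ)

lemma perturbedValue_zero_of_forall_le {β : Fin p → ℝ}
    (hmin : ∀ x, objective V L lam1 lam2 β ≤ objective V L lam1 lam2 x) :
    perturbedValue V L lam1 lam2 0 = objective V L lam1 lam2 β := by
  have : perturbedValue V L lam1 lam2 0 = ⨅ x, objective V L lam1 lam2 x := by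
    simp [perturbedValue, objective]
  rw [this]
  exact le_antisymm (ciInf_le ⟨_, forall_mem_range.2 hmin⟩ β) (le_ciInf hmin)

lemma perturbedValue_le (hlam1 : 0 ≤ lam1) (hlam2 : 0 ≤ lam2)
    (hΦ : BddBelow (range (objective V L lam1 lam2))) (x a : Fin p → ℝ) (b : Fin m → ℝ) :
    perturbedValue V L lam1 lam2 (x - a, L *ᵥ x - b) ≤ V x + lam1 * l1 a + lam2 * l1 b := by
  refine (ciInf_le (bddBelow_perturbed hlam1 hlam2 hΦ _) x).trans_eq ?_
  simp only [sub_sub_cancel]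

theorem exists_multipliers_of_forall_le (hV : ConvexOn ℝ univ V) (hlam1 : 0 ≤ lam1)
    (hlam2 : 0 ≤ lam2) {β : Fin p → ℝ}
    (hmin : ∀ x, objective V L lam1 lam2 β ≤ objective V L lam1 lam2 x) :
    ∃ u v, ∀ x a b, objective V L lam1 lam2 β ≤ lagrangian V L lam1 lam2 x a b u v := by
  have hΦ : BddBelow (range (objective V L lam1 lam2)) := ⟨_, forall_mem_range.2 hmin⟩
  have hconv := convexOn_perturbedValue hV hlam1 hlam2 hΦ
  obtain ⟨φ, hφ⟩ := hconv.exists_subgradient_of_continuous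
    (continuousOn_univ.1 (hconv.continuousOn isOpen_univ)) 0
  obtain ⟨u, v, huv⟩ := (-φ).exists_dotp_add_dotp_eq
  refine ⟨u, v, fun x a b => ?_⟩
  have hsub := hφ (x - a, L *ᵥ x - b)
  have hle := perturbedValue_le hlam1 hlam2 hΦ x a b
  have hφw := huv (x - a, L *ᵥ x - b)
  rw [perturbedValue_zero_of_forall_le hmin, sub_zero] at hsub
  simp only [_root_.neg_apply] at hφw
  unfold lagrangian
  linarith

end FusedLasso

theorem fusedLasso_saddlePoint_iff_general
    {p m : ℕ}
    (V : (Fin p → ℝ) → ℝ) (hV : ConvexOn ℝ Set.univ V)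
    (L : Matrix (Fin m) (Fin p) ℝ)
    (lam1 lam2 mu1 mu2 : ℝ)
    (hlam1 : 0 < lam1) (hlam2 : 0 < lam2)
    (hmu1 : 0 < mu1) (hmu2 : 0 < mu2)
    (Bstar : Fin p → ℝ) :
    (∀ x : Fin p → ℝ,
      V Bstar + lam1 * l1 Bstar + lam2 * l1 (L.mulVec Bstar)
        ≤ V x + lam1 * l1 x + lam2 * l1 (L.mulVec x)) ↔
    (∃ (astar ustar : Fin p → ℝ) (bstar vstar : Fin m → ℝ),
      ∀ (x a u : Fin p → ℝ) (b v : Fin m → ℝ),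
        (V Bstar + lam1 * l1 astar + lam2 * l1 bstar
            + dotp u (Bstar - astar) + dotp v (L.mulVec Bstar - bstar)
            + (mu1 / 2) * (l2 (Bstar - astar)) ^ 2
            + (mu2 / 2) * (l2 (L.mulVec Bstar - bstar)) ^ 2
          ≤ V Bstar + lam1 * l1 astar + lam2 * l1 bstar
            + dotp ustar (Bstar - astar) + dotp vstar (L.mulVec Bstar - bstar)
            + (mu1 / 2) * (l2 (Bstar - astar)) ^ 2
            + (mu2 / 2) * (l2 (L.mulVec Bstar - bstar)) ^ 2) ∧
        (V Bstar + lam1 * l1 astar + lam2 * l1 bstar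
            + dotp ustar (Bstar - astar) + dotp vstar (L.mulVec Bstar - bstar)
            + (mu1 / 2) * (l2 (Bstar - astar)) ^ 2
            + (mu2 / 2) * (l2 (L.mulVec Bstar - bstar)) ^ 2
          ≤ V x + lam1 * l1 a + lam2 * l1 b
            + dotp ustar (x - a) + dotp vstar (L.mulVec x - b)
            + (mu1 / 2) * (l2 (x - a)) ^ 2
            + (mu2 / 2) * (l2 (L.mulVec x - b)) ^ 2)) := by
  open FusedLasso in
  constructor
  · intro hmin
    obtain ⟨ustar, vstar, hmult⟩ := exists_multipliers_of_forall_le hV hlam1.le hlam2.le hmin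
    refine ⟨Bstar, ustar, L *ᵥ Bstar, vstar, fun x a u b v => ⟨?_, ?_⟩⟩
    · exact ((augLagrangian_feasible Bstar u v).trans
        (augLagrangian_feasible Bstar ustar vstar).symm).le
    · calc augLagrangian V L lam1 lam2 mu1 mu2 Bstar Bstar (L *ᵥ Bstar) ustar vstar
          = objective V L lam1 lam2 Bstar := augLagrangian_feasible Bstar ustar vstar
        _ ≤ lagrangian V L lam1 lam2 x a b ustar vstar := hmult x a b
        _ ≤ augLagrangian V L lam1 lam2 mu1 mu2 x a b ustar vstar :=
          lagrangian_le_augLagrangian hmu1.le hmu2.le x a b ustar vstar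
  · rintro ⟨astar, ustar, bstar, vstar, hsaddle⟩ x
    obtain ⟨rfl, rfl⟩ := feasible_of_forall_augLagrangian_le fun u v =>
      (hsaddle Bstar astar u bstar v).1
    calc objective V L lam1 lam2 Bstar
        = augLagrangian V L lam1 lam2 mu1 mu2 Bstar Bstar (L *ᵥ Bstar) ustar vstar :=
          (augLagrangian_feasible Bstar ustar vstar).symm
      _ ≤ augLagrangian V L lam1 lam2 mu1 mu2 x x (L *ᵥ x) ustar vstar :=
          (hsaddle x x ustar (L *ᵥ x) vstar).2
      _ = objective V L lam1 lam2 x := augLagrangian_feasible x ustar vstar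

/-- Optimality for the generalized fused Lasso is equivalent to being part of a
saddle point of the augmented Lagrangian. -/
theorem fusedLasso_saddlePoint_iff
    {p m : ℕ} (hp : 0 < p) (hm : 0 < m)
    (V : (Fin p → ℝ) → ℝ) (hV : ConvexOn ℝ Set.univ V)
    (L : Matrix (Fin m) (Fin p) ℝ)
    (lam1 lam2 mu1 mu2 : ℝ)
    (hlam1 : 0 < lam1) (hlam2 : 0 < lam2)
    (hmu1 : 0 < mu1) (hmu2 : 0 < mu2)
    (Bstar : Fin p → ℝ) :
    (∀ x : Fin p → ℝ,
      V Bstar + lam1 * l1 Bstar + lam2 * l1 (L.mulVec Bstar)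
        ≤ V x + lam1 * l1 x + lam2 * l1 (L.mulVec x)) ↔
    (∃ (astar ustar : Fin p → ℝ) (bstar vstar : Fin m → ℝ),
      ∀ (x a u : Fin p → ℝ) (b v : Fin m → ℝ),
        (V Bstar + lam1 * l1 astar + lam2 * l1 bstar
            + dotp u (Bstar - astar) + dotp v (L.mulVec Bstar - bstar)
            + (mu1 / 2) * (l2 (Bstar - astar)) ^ 2
            + (mu2 / 2) * (l2 (L.mulVec Bstar - bstar)) ^ 2
          ≤ V Bstar + lam1 * l1 astar + lam2 * l1 bstar
            + dotp ustar (Bstar - astar) + dotp vstar (L.mulVec Bstar - bstar)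
            + (mu1 / 2) * (l2 (Bstar - astar)) ^ 2
            + (mu2 / 2) * (l2 (L.mulVec Bstar - bstar)) ^ 2) ∧
        (V Bstar + lam1 * l1 astar + lam2 * l1 bstar
            + dotp ustar (Bstar - astar) + dotp vstar (L.mulVec Bstar - bstar)
            + (mu1 / 2) * (l2 (Bstar - astar)) ^ 2
            + (mu2 / 2) * (l2 (L.mulVec Bstar - bstar)) ^ 2
          ≤ V x + lam1 * l1 a + lam2 * l1 b
            + dotp ustar (x - a) + dotp vstar (L.mulVec x - b)
            + (mu1 / 2) * (l2 (x - a)) ^ 2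
            + (mu2 / 2) * (l2 (L.mulVec x - b)) ^ 2)) :=
  fusedLasso_saddlePoint_iff_general V hV L lam1 lam2 mu1 mu2 hlam1 hlam2 hmu1 hmu2 Bstar
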